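/- arXiv:1610.04583 — 3 statements merged into one kernel-verified Lean document; each statement's English description precedes it below -/
import Mathlib

section
/- Let γ_1,…,γ_m be nonnegative reals, let z_i ∈ ℂ^{d_i×d_i} for each i, and let h, g ∈ G. Then N_ρ((γ_i q_i(hg) + √γ_i z_i)_i) = ρ(h) · N_ρ((γ_i q_i(g) + √γ_i q_i(h⁻¹) z_i)_i), and D((γ_i q_i(hg) + √γ_i z_i)_i) = D((γ_i q_i(g) + √γ_i q_i(h⁻¹) z_i)_i). Consequently, whenever this common denominator is nonzero, F_ρ((γ_i q_i(hg) + √γ_i z_i)_i) = ρ(h) · F_ρ((γ_i q_i(g) + √γ_i q_i(h⁻¹) z_i)_i). -/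
open MeasureTheory Matrix

/-!
Since `qᵢ(hg) = qᵢ(h) qᵢ(g)` and `zᵢ = qᵢ(h) qᵢ(h⁻¹) zᵢ`, the two tuples are related by
`w₁ᵢ = qᵢ(h) w₂ᵢ`. Left multiplication by the unitary `qᵢ(h)` preserves `⟨A, B⟩ = Tr (A B*)`, so
the exponent `Σᵢ ⟨w₁ᵢ, qᵢ(hk)⟩` equals `Σᵢ ⟨w₂ᵢ, qᵢ(k)⟩`. Substituting `k ↦ hk` in the
left-invariant integrals and splitting `ρ(hk) = ρ(h) ρ(k)` gives both identities, and the one for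
`F_ρ` follows.
-/

theorem Matrix.trace_mul_conjTranspose_unitary_mul {n R : Type*} [Fintype n] [DecidableEq n]
    [CommSemiring R] [StarRing R] {U : Matrix n n R} (hU : Uᴴ * U = 1) (A B : Matrix n n R) :
    ((U * A) * (U * B)ᴴ).trace = (A * Bᴴ).trace := by
  rw [conjTranspose_mul, ← mul_assoc, trace_mul_comm, ← mul_assoc, ← mul_assoc, hU, Matrix.one_mul]

theorem integral_mul_matrix_apply {α 𝕜 l m n : Type*} [MeasurableSpace α] {μ : Measure α}
    [RCLike 𝕜] [Fintype m] (M : Matrix l m 𝕜) (F : α → Matrix m n 𝕜)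
    (hF : ∀ c b, Integrable (fun x => F x c b) μ) (a : l) (b : n) :
    ∫ x, (M * F x) a b ∂μ = (M * Matrix.of fun c b => ∫ x, F x c b ∂μ) a b := by
  simp only [mul_apply, of_apply]
  rw [integral_finsetSum _ fun c _ => (hF c b).const_mul _]
  simp only [integral_const_mul]

section LogWeight

variable {G ι : Type*} [Fintype ι] {n : ι → Type*} [∀ i, Fintype (n i)]

def logWeight (q : ∀ i, G → Matrix (n i) (n i) ℂ) (w : ∀ i, Matrix (n i) (n i) ℂ) (k : G) : ℂ :=
  ∑ i, (w i * (q i k)ᴴ).trace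

theorem logWeight_mul_left [∀ i, DecidableEq (n i)] [Mul G] {q : ∀ i, G → Matrix (n i) (n i) ℂ}
    (hq_mul : ∀ i, ∀ a b : G, q i (a * b) = q i a * q i b)
    (hq_unitary : ∀ i, ∀ g : G, (q i g)ᴴ * q i g = 1) {h : G} {w₁ w₂ : ∀ i, Matrix (n i) (n i) ℂ}
    (hw : ∀ i, w₁ i = q i h * w₂ i) (k : G) :
    logWeight q w₁ (h * k) = logWeight q w₂ k :=
  Finset.sum_congr rfl fun i _ => by
    rw [hw, hq_mul, trace_mul_conjTranspose_unitary_mul (hq_unitary i h)]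

theorem continuous_logWeight [TopologicalSpace G] {q : ∀ i, G → Matrix (n i) (n i) ℂ}
    (hq_cont : ∀ i, Continuous (q i)) (w : ∀ i, Matrix (n i) (n i) ℂ) :
    Continuous (logWeight q w) :=
  continuous_finsetSum _ fun i _ =>
    (continuous_const.matrix_mul (hq_cont i).matrix_conjTranspose).matrix_trace

variable [Group G] [MeasurableSpace G] [MeasurableMul G] (μ : Measure G) [μ.IsMulLeftInvariant]
  {q : ∀ i, G → Matrix (n i) (n i) ℂ}

theorem integral_exp_logWeight_eq [∀ i, DecidableEq (n i)]
    (hq_mul : ∀ i, ∀ a b : G, q i (a * b) = q i a * q i b)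
    (hq_unitary : ∀ i, ∀ g : G, (q i g)ᴴ * q i g = 1) {h : G} {w₁ w₂ : ∀ i, Matrix (n i) (n i) ℂ}
    (hw : ∀ i, w₁ i = q i h * w₂ i) :
    ∫ k, Complex.exp (logWeight q w₁ k) ∂μ = ∫ k, Complex.exp (logWeight q w₂ k) ∂μ := by
  rw [← integral_mul_left_eq_self _ h]
  simp only [logWeight_mul_left hq_mul hq_unitary hw]

theorem integral_apply_mul_exp_logWeight_eq [∀ i, DecidableEq (n i)] [TopologicalSpace G]
    [CompactSpace G] [OpensMeasurableSpace G] [IsFiniteMeasure μ]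
    (hq_mul : ∀ i, ∀ a b : G, q i (a * b) = q i a * q i b)
    (hq_unitary : ∀ i, ∀ g : G, (q i g)ᴴ * q i g = 1) (hq_cont : ∀ i, Continuous (q i))
    {h : G} {w₁ w₂ : ∀ i, Matrix (n i) (n i) ℂ} (hw : ∀ i, w₁ i = q i h * w₂ i)
    {p : Type*} [Fintype p] {ρ : G → Matrix p p ℂ} (hρ_mul : ∀ a b : G, ρ (a * b) = ρ a * ρ b)
    (hρ_cont : Continuous ρ) (a b : p) :
    ∫ k, ρ k a b * Complex.exp (logWeight q w₁ k) ∂μ =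
      (ρ h * Matrix.of fun a b => ∫ k, ρ k a b * Complex.exp (logWeight q w₂ k) ∂μ) a b := by
  rw [← integral_mul_left_eq_self _ h]
  have hρ_integrand (k : G) : ρ (h * k) a b * Complex.exp (logWeight q w₁ (h * k)) =
      (ρ h * Matrix.of fun c b => ρ k c b * Complex.exp (logWeight q w₂ k)) a b := by
    simp only [logWeight_mul_left hq_mul hq_unitary hw, hρ_mul, mul_apply, of_apply,
      Finset.sum_mul, mul_assoc]
  have hintegrable (c b : p) :
      Integrable (fun k => ρ k c b * Complex.exp (logWeight q w₂ k)) μ :=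
    ((hρ_cont.matrix_elem c b).mul (continuous_logWeight hq_cont w₂).cexp
      ).integrable_of_hasCompactSupport (HasCompactSupport.of_compactSpace _)
  simp only [hρ_integrand]
  exact integral_mul_matrix_apply _ _ hintegrable a b

end LogWeight

theorem statement0_general
    {G : Type*} [Group G] [TopologicalSpace G] [IsTopologicalGroup G] [CompactSpace G]
    [MeasurableSpace G] [BorelSpace G]
    (μ : Measure G) [μ.IsHaarMeasure]
    {m : ℕ} (d : Fin m → ℕ)
    (q : ∀ i : Fin m, G → Matrix (Fin (d i)) (Fin (d i)) ℂ)
    (hq_mul : ∀ i, ∀ a b : G, q i (a * b) = q i a * q i b)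
    (hq_one : ∀ i, q i 1 = 1)
    (hq_unitary : ∀ i, ∀ g : G, (q i g)ᴴ * q i g = 1)
    (hq_cont : ∀ i, Continuous (q i))
    (i₀ : Fin m)
    -- the numerator `N_ρ(w) = ∫_G ρ(g) exp(Σᵢ ⟨wᵢ, qᵢ(g)⟩) dg`, entrywise
    (N : (∀ i : Fin m, Matrix (Fin (d i)) (Fin (d i)) ℂ) →
      Matrix (Fin (d i₀)) (Fin (d i₀)) ℂ)
    (hN : ∀ w, N w = Matrix.of fun a b =>
      ∫ k, q i₀ k a b * Complex.exp (∑ i, (w i * (q i k)ᴴ).trace) ∂μ)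
    -- the denominator `D(w) = ∫_G exp(Σᵢ ⟨wᵢ, qᵢ(g)⟩) dg`
    (D : (∀ i : Fin m, Matrix (Fin (d i)) (Fin (d i)) ℂ) → ℂ)
    (hD : ∀ w, D w = ∫ k, Complex.exp (∑ i, (w i * (q i k)ᴴ).trace) ∂μ)
    (γ : Fin m → ℝ)
    (z : ∀ i : Fin m, Matrix (Fin (d i)) (Fin (d i)) ℂ)
    (h g : G)
    (w₁ w₂ : ∀ i : Fin m, Matrix (Fin (d i)) (Fin (d i)) ℂ)
    (hw₁ : ∀ i, w₁ i = ((γ i : ℂ) • q i (h * g)) + ((Real.sqrt (γ i) : ℂ) • z i))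
    (hw₂ : ∀ i, w₂ i = ((γ i : ℂ) • q i g) + ((Real.sqrt (γ i) : ℂ) • (q i h⁻¹ * z i))) :
    N w₁ = q i₀ h * N w₂ ∧ D w₁ = D w₂ ∧
      (D w₁ ≠ 0 → (D w₁)⁻¹ • N w₁ = q i₀ h * ((D w₂)⁻¹ • N w₂)) := by
  have hw (i : Fin m) : w₁ i = q i h * w₂ i := by
    rw [hw₁, hw₂, Matrix.mul_add, Matrix.mul_smul, Matrix.mul_smul, ← Matrix.mul_assoc,
      ← hq_mul, ← hq_mul, mul_inv_cancel, hq_one, Matrix.one_mul]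
  have hN_eq : N w₁ = q i₀ h * N w₂ := by
    rw [hN, hN]
    ext a b
    exact integral_apply_mul_exp_logWeight_eq μ hq_mul hq_unitary hq_cont hw (hq_mul i₀)
      (hq_cont i₀) a b
  have hD_eq : D w₁ = D w₂ := by
    rw [hD, hD]
    exact integral_exp_logWeight_eq μ hq_mul hq_unitary hw
  exact ⟨hN_eq, hD_eq, fun _ => by rw [hN_eq, hD_eq, Matrix.mul_smul]⟩

/-- Left-equivariance of the numerator `N_ρ`, invariance of the denominator `D`,
and hence left-equivariance of the MMSE map `F_ρ = N_ρ / D`, under the substitution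
`(γᵢ qᵢ(hg) + √γᵢ zᵢ)ᵢ ↦ (γᵢ qᵢ(g) + √γᵢ qᵢ(h⁻¹) zᵢ)ᵢ`. -/
theorem statement0
    {G : Type*} [Group G] [TopologicalSpace G] [IsTopologicalGroup G] [CompactSpace G]
    [MeasurableSpace G] [BorelSpace G]
    (μ : Measure G) [μ.IsHaarMeasure] [IsProbabilityMeasure μ]
    {m : ℕ} (d : Fin m → ℕ)
    (q : ∀ i : Fin m, G → Matrix (Fin (d i)) (Fin (d i)) ℂ)
    (hq_mul : ∀ i, ∀ a b : G, q i (a * b) = q i a * q i b)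
    (hq_one : ∀ i, q i 1 = 1)
    (hq_unitary : ∀ i, ∀ g : G, (q i g)ᴴ * q i g = 1)
    (hq_cont : ∀ i, Continuous (q i))
    (i₀ : Fin m)
    -- the numerator `N_ρ(w) = ∫_G ρ(g) exp(Σᵢ ⟨wᵢ, qᵢ(g)⟩) dg`, entrywise
    (N : (∀ i : Fin m, Matrix (Fin (d i)) (Fin (d i)) ℂ) →
      Matrix (Fin (d i₀)) (Fin (d i₀)) ℂ)
    (hN : ∀ w, N w = Matrix.of fun a b =>
      ∫ k, q i₀ k a b * Complex.exp (∑ i, (w i * (q i k)ᴴ).trace) ∂μ)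
    -- the denominator `D(w) = ∫_G exp(Σᵢ ⟨wᵢ, qᵢ(g)⟩) dg`
    (D : (∀ i : Fin m, Matrix (Fin (d i)) (Fin (d i)) ℂ) → ℂ)
    (hD : ∀ w, D w = ∫ k, Complex.exp (∑ i, (w i * (q i k)ᴴ).trace) ∂μ)
    (γ : Fin m → ℝ) (hγ : ∀ i, 0 ≤ γ i)
    (z : ∀ i : Fin m, Matrix (Fin (d i)) (Fin (d i)) ℂ)
    (h g : G)
    (w₁ w₂ : ∀ i : Fin m, Matrix (Fin (d i)) (Fin (d i)) ℂ)
    (hw₁ : ∀ i, w₁ i = ((γ i : ℂ) • q i (h * g)) + ((Real.sqrt (γ i) : ℂ) • z i))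
    (hw₂ : ∀ i, w₂ i = ((γ i : ℂ) • q i g) + ((Real.sqrt (γ i) : ℂ) • (q i h⁻¹ * z i))) :
    N w₁ = q i₀ h * N w₂ ∧ D w₁ = D w₂ ∧
      (D w₁ ≠ 0 → (D w₁)⁻¹ • N w₁ = q i₀ h * ((D w₂)⁻¹ • N w₂)) :=
  statement0_general μ d q hq_mul hq_one hq_unitary hq_cont i₀ N hN D hD γ z h g w₁ w₂ hw₁ hw₂
end

section
/- Let γ_1,…,γ_m be nonnegative reals, let z_i ∈ ℂ^{d_i×d_i} for each i, and let h, g ∈ G. Then N_ρ((γ_i q_i(gh) + √γ_i z_i)_i) = N_ρ((γ_i q_i(g) + √γ_i z_i q_i(h⁻¹))_i) · ρ(h), and D((γ_i q_i(gh) + √γ_i z_i)_i) = D((γ_i q_i(g) + √γ_i z_i q_i(h⁻¹))_i). Consequently, whenever this common denominator is nonzero, F_ρ((γ_i q_i(gh) + √γ_i z_i)_i) = F_ρ((γ_i q_i(g) + √γ_i z_i q_i(h⁻¹))_i) · ρ(h). -/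
/-!
Right translation `k ↦ k * h` preserves the Haar probability measure of a compact group. Since
`qᵢ(k h)ᴴ = qᵢ(h⁻¹) qᵢ(k)ᴴ`, it turns the pairing `⟨wᵢ, qᵢ(k h)⟩` into `⟨wᵢ qᵢ(h⁻¹), qᵢ(k)⟩`, and
`(γᵢ qᵢ(g h) + √γᵢ zᵢ) qᵢ(h⁻¹) = γᵢ qᵢ(g) + √γᵢ zᵢ qᵢ(h⁻¹)`. In the numerator the factor `ρ(k)`
becomes `ρ(k) ρ(h)`, and the constant `ρ(h)` comes out of the integral.
-/

open MeasureTheory Matrix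

theorem isMulRightInvariant_of_isHaarMeasure_of_isProbabilityMeasure {G : Type*} [Group G]
    [TopologicalSpace G] [IsTopologicalGroup G] [CompactSpace G] [MeasurableSpace G]
    [BorelSpace G] (μ : Measure G) [μ.IsHaarMeasure] [IsProbabilityMeasure μ] :
    μ.IsMulRightInvariant where
  map_mul_right_eq_self g := by
    have : IsProbabilityMeasure (μ.map (· * g)) :=
      Measure.isProbabilityMeasure_map (measurable_mul_const g).aemeasurable
    exact Measure.isHaarMeasure_eq_of_isProbabilityMeasure _ μ

theorem conjTranspose_eq_map_inv {G n α : Type*} [Group G] [Fintype n] [DecidableEq n]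
    [Semiring α] [Star α] {q : G → Matrix n n α} (hmul : ∀ a b, q (a * b) = q a * q b)
    (hone : q 1 = 1) (hunitary : ∀ g, (q g)ᴴ * q g = 1) (g : G) : (q g)ᴴ = q g⁻¹ :=
  calc (q g)ᴴ = (q g)ᴴ * (q g * q g⁻¹) := by rw [← hmul, mul_inv_cancel, hone, Matrix.mul_one]
    _ = q g⁻¹ := by rw [← Matrix.mul_assoc, hunitary, Matrix.one_mul]

theorem integral_mul_apply {X l n p 𝕜 : Type*} [MeasurableSpace X] {μ : Measure X} [Fintype n]
    [RCLike 𝕜] (A : X → Matrix l n 𝕜) (B : Matrix n p 𝕜)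
    (hA : ∀ a c, Integrable (fun x => A x a c) μ) (a : l) (b : p) :
    ∫ x, (A x * B) a b ∂μ = ((of fun a c => ∫ x, A x a c ∂μ) * B) a b := by
  simp only [mul_apply, of_apply]
  rw [integral_finsetSum _ fun c _ => (hA a c).mul_const _]
  simp only [integral_mul_const]

section ExpPairing

variable {G ι : Type*} [Fintype ι] {n : ι → Type*} [∀ i, Fintype (n i)]
  {q : ∀ i, G → Matrix (n i) (n i) ℂ}

noncomputable def expPairing (q : ∀ i, G → Matrix (n i) (n i) ℂ) (w : ∀ i, Matrix (n i) (n i) ℂ)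
    (k : G) : ℂ :=
  Complex.exp (∑ i, (w i * (q i k)ᴴ).trace)

theorem continuous_expPairing [TopologicalSpace G] (hq : ∀ i, Continuous (q i))
    (w : ∀ i, Matrix (n i) (n i) ℂ) : Continuous (expPairing q w) :=
  Complex.continuous_exp.comp <| continuous_finsetSum _ fun i _ =>
    (continuous_const.matrix_mul (hq i).matrix_conjTranspose).matrix_trace

theorem expPairing_mul_right [Group G] (hmul : ∀ i a b, q i (a * b) = q i a * q i b)
    (hstar : ∀ i a, (q i a)ᴴ = q i a⁻¹) (w : ∀ i, Matrix (n i) (n i) ℂ) (k h : G) :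
    expPairing q w (k * h) = expPairing q (fun i => w i * q i h⁻¹) k := by
  simp only [expPairing, hmul, conjTranspose_mul, hstar, Matrix.mul_assoc]

theorem integral_mul_expPairing_mul_right [Group G] [MeasurableSpace G] [MeasurableMul G]
    (μ : Measure G) [μ.IsMulRightInvariant] (hmul : ∀ i a b, q i (a * b) = q i a * q i b)
    (hstar : ∀ i a, (q i a)ᴴ = q i a⁻¹) (φ : G → ℂ) (w : ∀ i, Matrix (n i) (n i) ℂ) (h : G) :
    ∫ k, φ k * expPairing q w k ∂μ
      = ∫ k, φ (k * h) * expPairing q (fun i => w i * q i h⁻¹) k ∂μ := by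
  rw [← integral_mul_right_eq_self _ h]
  simp only [expPairing_mul_right hmul hstar]

end ExpPairing

theorem statement1_general
    {G : Type*} [Group G] [TopologicalSpace G] [IsTopologicalGroup G] [CompactSpace G]
    [MeasurableSpace G] [BorelSpace G]
    (μ : Measure G) [μ.IsHaarMeasure] [IsProbabilityMeasure μ]
    {m : ℕ} (d : Fin m → ℕ)
    (q : ∀ i : Fin m, G → Matrix (Fin (d i)) (Fin (d i)) ℂ)
    (hq_mul : ∀ i, ∀ a b : G, q i (a * b) = q i a * q i b)
    (hq_one : ∀ i, q i 1 = 1)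
    (hq_unitary : ∀ i, ∀ g : G, (q i g)ᴴ * q i g = 1)
    (hq_cont : ∀ i, Continuous (q i))
    (i₀ : Fin m)
    -- the numerator `N_ρ(w) = ∫_G ρ(g) exp(Σᵢ ⟨wᵢ, qᵢ(g)⟩) dg`, entrywise
    (N : (∀ i : Fin m, Matrix (Fin (d i)) (Fin (d i)) ℂ) →
      Matrix (Fin (d i₀)) (Fin (d i₀)) ℂ)
    (hN : ∀ w, N w = Matrix.of fun a b =>
      ∫ k, q i₀ k a b * Complex.exp (∑ i, (w i * (q i k)ᴴ).trace) ∂μ)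
    -- the denominator `D(w) = ∫_G exp(Σᵢ ⟨wᵢ, qᵢ(g)⟩) dg`
    (D : (∀ i : Fin m, Matrix (Fin (d i)) (Fin (d i)) ℂ) → ℂ)
    (hD : ∀ w, D w = ∫ k, Complex.exp (∑ i, (w i * (q i k)ᴴ).trace) ∂μ)
    (γ : Fin m → ℝ)
    (z : ∀ i : Fin m, Matrix (Fin (d i)) (Fin (d i)) ℂ)
    (h g : G)
    (w₁ w₂ : ∀ i : Fin m, Matrix (Fin (d i)) (Fin (d i)) ℂ)
    (hw₁ : ∀ i, w₁ i = ((γ i : ℂ) • q i (g * h)) + ((Real.sqrt (γ i) : ℂ) • z i))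
    (hw₂ : ∀ i, w₂ i = ((γ i : ℂ) • q i g) + ((Real.sqrt (γ i) : ℂ) • (z i * q i h⁻¹))) :
    N w₁ = N w₂ * q i₀ h ∧ D w₁ = D w₂ ∧
      (D w₁ ≠ 0 → (D w₁)⁻¹ • N w₁ = ((D w₂)⁻¹ • N w₂) * q i₀ h) := by
  have _ := isMulRightInvariant_of_isHaarMeasure_of_isProbabilityMeasure μ
  have hstar i := conjTranspose_eq_map_inv (hq_mul i) (hq_one i) (hq_unitary i)
  have hw : (fun i => w₁ i * q i h⁻¹) = w₂ := by
    funext i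
    rw [hw₁, hw₂, add_mul, smul_mul, smul_mul, hq_mul, Matrix.mul_assoc, ← hq_mul i h,
      mul_inv_cancel, hq_one, Matrix.mul_one]
  have hDeq : D w₁ = D w₂ := by
    rw [hD, hD, ← hw]
    simpa only [one_mul, expPairing] using
      integral_mul_expPairing_mul_right μ hq_mul hstar (fun _ => 1) w₁ h
  have hNeq : N w₁ = N w₂ * q i₀ h := by
    ext a b
    have hint a c : Integrable (fun k => q i₀ k a c * expPairing q w₂ k) μ :=
      (((hq_cont i₀).matrix_elem a c).mul (continuous_expPairing hq_cont w₂)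
        ).integrable_of_hasCompactSupport (.of_compactSpace _)
    calc N w₁ a b = ∫ k, q i₀ (k * h) a b * expPairing q w₂ k ∂μ := by
          rw [hN, of_apply, ← hw]
          exact integral_mul_expPairing_mul_right μ hq_mul hstar (fun k => q i₀ k a b) w₁ h
      _ = ∫ k, (of (fun a c => q i₀ k a c * expPairing q w₂ k) * q i₀ h) a b ∂μ := by
          simp only [hq_mul, mul_apply, of_apply, Finset.sum_mul,
            mul_right_comm _ _ (expPairing q w₂ _)]
      _ = (N w₂ * q i₀ h) a b := by
          rw [hN]
          exact integral_mul_apply (fun k => of fun a c => q i₀ k a c * expPairing q w₂ k) _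
            hint a b
  refine ⟨hNeq, hDeq, fun _ => ?_⟩
  rw [hNeq, hDeq, Matrix.smul_mul]

/-- Right-equivariance of the numerator `N_ρ`, invariance of the denominator `D`,
and hence right-equivariance of the MMSE map `F_ρ = N_ρ / D`, under the substitution
`(γᵢ qᵢ(gh) + √γᵢ zᵢ)ᵢ ↦ (γᵢ qᵢ(g) + √γᵢ zᵢ qᵢ(h⁻¹))ᵢ`. -/
theorem statement1
    {G : Type*} [Group G] [TopologicalSpace G] [IsTopologicalGroup G] [CompactSpace G]
    [MeasurableSpace G] [BorelSpace G]
    (μ : Measure G) [μ.IsHaarMeasure] [IsProbabilityMeasure μ]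
    {m : ℕ} (d : Fin m → ℕ)
    (q : ∀ i : Fin m, G → Matrix (Fin (d i)) (Fin (d i)) ℂ)
    (hq_mul : ∀ i, ∀ a b : G, q i (a * b) = q i a * q i b)
    (hq_one : ∀ i, q i 1 = 1)
    (hq_unitary : ∀ i, ∀ g : G, (q i g)ᴴ * q i g = 1)
    (hq_cont : ∀ i, Continuous (q i))
    (i₀ : Fin m)
    -- the numerator `N_ρ(w) = ∫_G ρ(g) exp(Σᵢ ⟨wᵢ, qᵢ(g)⟩) dg`, entrywise
    (N : (∀ i : Fin m, Matrix (Fin (d i)) (Fin (d i)) ℂ) →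
      Matrix (Fin (d i₀)) (Fin (d i₀)) ℂ)
    (hN : ∀ w, N w = Matrix.of fun a b =>
      ∫ k, q i₀ k a b * Complex.exp (∑ i, (w i * (q i k)ᴴ).trace) ∂μ)
    -- the denominator `D(w) = ∫_G exp(Σᵢ ⟨wᵢ, qᵢ(g)⟩) dg`
    (D : (∀ i : Fin m, Matrix (Fin (d i)) (Fin (d i)) ℂ) → ℂ)
    (hD : ∀ w, D w = ∫ k, Complex.exp (∑ i, (w i * (q i k)ᴴ).trace) ∂μ)
    (γ : Fin m → ℝ) (hγ : ∀ i, 0 ≤ γ i)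
    (z : ∀ i : Fin m, Matrix (Fin (d i)) (Fin (d i)) ℂ)
    (h g : G)
    (w₁ w₂ : ∀ i : Fin m, Matrix (Fin (d i)) (Fin (d i)) ℂ)
    (hw₁ : ∀ i, w₁ i = ((γ i : ℂ) • q i (g * h)) + ((Real.sqrt (γ i) : ℂ) • z i))
    (hw₂ : ∀ i, w₂ i = ((γ i : ℂ) • q i g) + ((Real.sqrt (γ i) : ℂ) • (z i * q i h⁻¹))) :
    N w₁ = N w₂ * q i₀ h ∧ D w₁ = D w₂ ∧
      (D w₁ ≠ 0 → (D w₁)⁻¹ • N w₁ = ((D w₂)⁻¹ • N w₂) * q i₀ h) :=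
  statement1_general μ d q hq_mul hq_one hq_unitary hq_cont i₀ N hN D hD γ z h g w₁ w₂ hw₁ hw₂
end

section
/- Define r(t) := (∫_0^{2π} cos θ · e^{2t cos θ} dθ) / (∫_0^{2π} e^{2t cos θ} dθ) for t ≥ 0 (the denominator is strictly positive). Then for every t ≥ 0 one has 0 ≤ r(t) < 1, and for every nonzero c ∈ ℂ, the denominator D(c) := ∫_0^{2π} exp(2 Re(conj(c) e^{iθ})) dθ is strictly positive and (1/D(c)) ∫_0^{2π} e^{iθ} exp(2 Re(conj(c) e^{iθ})) dθ = (c/|c|) · r(|c|). In other words, the normalized averaging map preserves the phase of c and maps its magnitude into [0,1) via the ratio r (which equals the ratio I_1(2t)/I_0(2t) of modified Bessel functions of the first kind). -/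
open MeasureTheory intervalIntegral

/-!
Since `conj(c) e^{iθ}` has real part `|c| cos(θ - arg c)`, translating `θ` by `arg c` (all
integrands are `2π`-periodic) turns `D(c)` into the denominator of `r(|c|)` and the numerator
into `e^{i arg c} ∫ e^{iθ} e^{2|c| cos θ} dθ`; the sine part of the latter vanishes by the
reflection `θ ↦ 2π - θ`, leaving `c/|c|` times the numerator of `r(|c|)`. Since `∫ cos = 0`, the
numerator of `r(t)` is `∫ cos θ (e^{2t cos θ} - 1) dθ ≥ 0`, and `r(t) < 1` because `cos θ < 1`
on `(0, 2π)`.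
-/

theorem Function.Periodic.intervalIntegral_comp_sub_eq {E : Type*} [NormedAddCommGroup E]
    [NormedSpace ℝ E] {f : ℝ → E} {T : ℝ} (hf : Function.Periodic f T) (a d : ℝ) :
    ∫ x in a..a + T, f (x - d) = ∫ x in a..a + T, f x := by
  rw [integral_comp_sub_right, show a + T - d = a - d + T by ring, hf.intervalIntegral_add_eq]

theorem intervalIntegral.integral_eq_zero_of_comp_sub_eq_neg {E : Type*} [NormedAddCommGroup E]
    [NormedSpace ℝ E] {f : ℝ → E} {a b : ℝ} (hf : ∀ x, f (a + b - x) = -f x) :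
    ∫ x in a..b, f x = 0 := by
  have h := integral_comp_sub_left (a := a) (b := b) f (a + b)
  simp only [hf, integral_neg, add_sub_cancel_right, add_sub_cancel_left] at h
  have h2 : (2 : ℝ) • ∫ x in a..b, f x = 0 := by
    rw [two_smul]; nth_rewrite 1 [← h]; exact neg_add_cancel _
  exact (smul_eq_zero.mp h2).resolve_left two_ne_zero

theorem Complex.re_conj_mul_exp_ofReal_mul_I (c : ℂ) (θ : ℝ) :
    (starRingEnd ℂ c * exp (θ * I)).re = ‖c‖ * Real.cos (θ - c.arg) := by
  rw [Real.cos_sub, mul_add, ← mul_assoc, ← mul_assoc, mul_right_comm, norm_mul_cos_arg,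
    mul_right_comm, norm_mul_sin_arg]
  simp [exp_ofReal_mul_I_re, exp_ofReal_mul_I_im]

theorem integral_sin_mul_comp_cos_eq_zero (g : ℝ → ℝ) :
    ∫ θ in (0:ℝ)..2 * Real.pi, Real.sin θ * g (Real.cos θ) = 0 :=
  integral_eq_zero_of_comp_sub_eq_neg fun θ => by
    rw [zero_add, Real.sin_two_pi_sub, Real.cos_two_pi_sub, neg_mul]

theorem integral_exp_cos_pos (t : ℝ) :
    0 < ∫ θ in (0:ℝ)..2 * Real.pi, Real.exp (2 * t * Real.cos θ) :=
  intervalIntegral_pos_of_pos ((by fun_prop : Continuous _).intervalIntegrable _ _) (fun _ => Real.exp_pos _) Real.two_pi_pos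

theorem integral_cos_mul_exp_cos_nonneg {t : ℝ} (ht : 0 ≤ t) :
    0 ≤ ∫ θ in (0:ℝ)..2 * Real.pi, Real.cos θ * Real.exp (2 * t * Real.cos θ) := by
  have hsub : ∫ θ in (0:ℝ)..2 * Real.pi, Real.cos θ * Real.exp (2 * t * Real.cos θ)
      = ∫ θ in (0:ℝ)..2 * Real.pi, Real.cos θ * (Real.exp (2 * t * Real.cos θ) - 1) := by
    simp only [mul_sub, mul_one]
    rw [intervalIntegral.integral_sub (Continuous.intervalIntegrable (by fun_prop) _ _)
      (Continuous.intervalIntegrable (by fun_prop) _ _), integral_cos]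
    simp
  rw [hsub]
  refine integral_nonneg (by positivity) fun θ _ => ?_
  rcases le_total 0 (Real.cos θ) with h | h
  · exact mul_nonneg h (sub_nonneg.mpr (Real.one_le_exp (by positivity)))
  · exact mul_nonneg_of_nonpos_of_nonpos h (sub_nonpos.mpr (Real.exp_le_one_iff.mpr
      (mul_nonpos_of_nonneg_of_nonpos (by positivity) h)))

theorem integral_cos_mul_exp_cos_lt (t : ℝ) :
    ∫ θ in (0:ℝ)..2 * Real.pi, Real.cos θ * Real.exp (2 * t * Real.cos θ) <
      ∫ θ in (0:ℝ)..2 * Real.pi, Real.exp (2 * t * Real.cos θ) := by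
  rw [← sub_pos, ← intervalIntegral.integral_sub (Continuous.intervalIntegrable (by fun_prop) _ _)
      (Continuous.intervalIntegrable (by fun_prop) _ _)]
  refine intervalIntegral_pos_of_pos_on (Continuous.intervalIntegrable (by fun_prop) _ _) (fun θ hθ => ?_) Real.two_pi_pos
  have hcos : Real.cos θ < 1 := (Real.cos_le_one θ).lt_of_ne fun h =>
    hθ.1.ne' ((Real.cos_eq_one_iff_of_lt_of_lt (by linarith [hθ.1, Real.pi_pos]) hθ.2).mp h)
  nlinarith [Real.exp_pos (2 * t * Real.cos θ)]

theorem integral_exp_re_conj_mul_exp (c : ℂ) :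
    ∫ θ in (0:ℝ)..2 * Real.pi, Real.exp (2 * (starRingEnd ℂ c * Complex.exp (θ * Complex.I)).re)
      = ∫ θ in (0:ℝ)..2 * Real.pi, Real.exp (2 * ‖c‖ * Real.cos θ) := by
  have hper : Function.Periodic (fun u => Real.exp (2 * ‖c‖ * Real.cos u)) (2 * Real.pi) :=
    Real.cos_periodic.comp fun x => Real.exp (2 * ‖c‖ * x)
  simp only [Complex.re_conj_mul_exp_ofReal_mul_I, ← mul_assoc]
  simpa using hper.intervalIntegral_comp_sub_eq 0 c.arg

theorem integral_exp_mul_I_mul_exp_cos (t : ℝ) :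
    ∫ θ in (0:ℝ)..2 * Real.pi, Complex.exp (θ * Complex.I) * (Real.exp (2 * t * Real.cos θ) : ℂ)
      = ((∫ θ in (0:ℝ)..2 * Real.pi, Real.cos θ * Real.exp (2 * t * Real.cos θ) : ℝ) : ℂ) := by
  have hsplit : ∀ θ : ℝ, Complex.exp (θ * Complex.I) * (Real.exp (2 * t * Real.cos θ) : ℂ)
      = ((Real.cos θ * Real.exp (2 * t * Real.cos θ) : ℝ) : ℂ)
        + ((Real.sin θ * Real.exp (2 * t * Real.cos θ) : ℝ) : ℂ) * Complex.I := by
    intro θ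
    rw [Complex.exp_mul_I]
    push_cast
    ring
  simp only [hsplit]
  rw [intervalIntegral.integral_add (Continuous.intervalIntegrable (by fun_prop) _ _)
      (Continuous.intervalIntegrable (by fun_prop) _ _), intervalIntegral.integral_mul_const,
    integral_ofReal, integral_ofReal,
    integral_sin_mul_comp_cos_eq_zero fun x => Real.exp (2 * t * x)]
  simp

theorem integral_exp_mul_I_mul_exp_re_conj_mul_exp (c : ℂ) :
    ∫ θ in (0:ℝ)..2 * Real.pi, Complex.exp (θ * Complex.I) *
        Complex.exp (2 * (((starRingEnd ℂ c * Complex.exp (θ * Complex.I)).re : ℝ) : ℂ))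
      = Complex.exp (c.arg * Complex.I) *
        ((∫ θ in (0:ℝ)..2 * Real.pi, Real.cos θ * Real.exp (2 * ‖c‖ * Real.cos θ) : ℝ) : ℂ) := by
  set g : ℝ → ℂ := fun u => Complex.exp (u * Complex.I) * (Real.exp (2 * ‖c‖ * Real.cos u) : ℂ)
  have hper : Function.Periodic g (2 * Real.pi) := by
    intro u
    simp only [g, Complex.ofReal_add, Real.cos_periodic u]
    push_cast
    rw [add_mul, Complex.exp_add, Complex.exp_two_pi_mul_I, mul_one]
  have hrot : ∀ θ : ℝ, Complex.exp (θ * Complex.I) *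
        Complex.exp (2 * (((starRingEnd ℂ c * Complex.exp (θ * Complex.I)).re : ℝ) : ℂ))
      = Complex.exp (c.arg * Complex.I) * g (θ - c.arg) := by
    intro θ
    simp only [g, Complex.re_conj_mul_exp_ofReal_mul_I, Complex.ofReal_exp, ← Complex.exp_add]
    congr 1
    push_cast
    ring
  simp only [hrot]
  rw [intervalIntegral.integral_const_mul, ← integral_exp_mul_I_mul_exp_cos]
  congr 1
  simpa only [zero_add] using hper.intervalIntegral_comp_sub_eq 0 c.arg

theorem Complex.div_norm_eq_exp_arg_mul_I {c : ℂ} (hc : c ≠ 0) :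
    c / (‖c‖ : ℂ) = exp (c.arg * I) := by
  rw [div_eq_iff (by simpa using hc), mul_comm, norm_mul_exp_arg_mul_I]

/-- The AMP soft-projection for `U(1)` synchronization with one frequency.
With `r(t) = (∫₀^{2π} cos θ e^{2t cos θ} dθ)/(∫₀^{2π} e^{2t cos θ} dθ)` one has
`0 ≤ r(t) < 1` for `t ≥ 0` (and the denominator is strictly positive); and for every
nonzero `c ∈ ℂ`, `D(c) = ∫₀^{2π} exp(2 Re(conj(c) e^{iθ})) dθ > 0` and
`(1/D(c)) ∫₀^{2π} e^{iθ} exp(2 Re(conj(c) e^{iθ})) dθ = (c/|c|) · r(|c|)`. -/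
theorem statement6
    (r : ℝ → ℝ)
    (hr : ∀ t : ℝ, r t =
      (∫ θ in (0:ℝ)..(2 * Real.pi), Real.cos θ * Real.exp (2 * t * Real.cos θ)) /
      (∫ θ in (0:ℝ)..(2 * Real.pi), Real.exp (2 * t * Real.cos θ)))
    (D : ℂ → ℝ)
    (hD : ∀ c : ℂ, D c =
      ∫ θ in (0:ℝ)..(2 * Real.pi),
        Real.exp (2 * ((starRingEnd ℂ) c * Complex.exp (θ * Complex.I)).re)) :
    (∀ t : ℝ, 0 ≤ t →
      0 < ∫ θ in (0:ℝ)..(2 * Real.pi), Real.exp (2 * t * Real.cos θ)) ∧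
    (∀ t : ℝ, 0 ≤ t → 0 ≤ r t ∧ r t < 1) ∧
    (∀ c : ℂ, c ≠ 0 → 0 < D c ∧
      (1 / (D c : ℂ)) *
        (∫ θ in (0:ℝ)..(2 * Real.pi),
          Complex.exp (θ * Complex.I) *
            Complex.exp (2 * ((((starRingEnd ℂ) c * Complex.exp (θ * Complex.I)).re : ℝ) : ℂ)))
      = (c / ((‖c‖ : ℝ) : ℂ)) * ((r ‖c‖ : ℝ) : ℂ)) := by
  refine ⟨fun t _ => integral_exp_cos_pos t, fun t ht => ?_, fun c hc => ?_⟩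
  · rw [hr]
    exact ⟨div_nonneg (integral_cos_mul_exp_cos_nonneg ht) (integral_exp_cos_pos t).le,
      (div_lt_one (integral_exp_cos_pos t)).mpr (integral_cos_mul_exp_cos_lt t)⟩
  · rw [hD, integral_exp_re_conj_mul_exp]
    refine ⟨integral_exp_cos_pos _, ?_⟩
    rw [integral_exp_mul_I_mul_exp_re_conj_mul_exp, hr, Complex.div_norm_eq_exp_arg_mul_I hc,
      Complex.ofReal_div]
    have hden := Complex.ofReal_ne_zero.mpr (integral_exp_cos_pos ‖c‖).ne'
    field_simp
end
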